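/- Let n ≥ 1 and set N = 2n. The diagonal matrix J = diag(q^{ρ_1}, …, q^{ρ_N}) satisfies the reflection equation R J₁ R^{t₁} J₂ = J₂ R^{t₁} J₁ R with respect to the R-matrix of Sp(2n). (This is the constant solution (4.2) used for the quantum symmetric space of type (4), Sp(2n)/U(n).) -/

import Mathlib

open Matrix

noncomputable section

/-- Kronecker product of two `N × N` matrices, with `(eᵢⱼ ⊗ eₖₗ)` having
`((i,k),(j,l))`-entry `1`. -/
def kron {N : ℕ} (A B : Matrix (Fin N) (Fin N) ℂ) :
    Matrix (Fin N × Fin N) (Fin N × Fin N) ℂ :=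
  fun p r => A p.1 r.1 * B p.2 r.2

/-- Partial transpose in the first tensor factor. -/
def ptransp {N : ℕ} (R : Matrix (Fin N × Fin N) (Fin N × Fin N) ℂ) :
    Matrix (Fin N × Fin N) (Fin N × Fin N) ℂ :=
  fun p r => R (r.1, p.2) (p.1, r.2)

/-- The reflection equation `R J₁ R^{t₁} J₂ = J₂ R^{t₁} J₁ R`. -/
def ReflectionEq {N : ℕ} (R : Matrix (Fin N × Fin N) (Fin N × Fin N) ℂ)
    (J : Matrix (Fin N) (Fin N) ℂ) : Prop :=
  R * kron J 1 * ptransp R * kron 1 J = kron 1 J * ptransp R * kron J 1 * R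

/-- Matrix units. -/
def e {N : ℕ} (i j : Fin N) : Matrix (Fin N) (Fin N) ℂ :=
  Matrix.single i j 1

/-- `κ_j` for `Sp(2n)` (0-based index): `κ_j = 1` if `j ≤ n` (1-based), `κ_j = −1` otherwise. -/
def kappaSp (n : ℕ) (j : Fin (2 * n)) : ℝ := if (j : ℕ) < n then 1 else -1

/-- `ρ_j` for `Sp(2n)` (here `j : Fin (2n)` is the 0-based version of the 1-based index `j+1`):
`ρ_j = n − j + 1` if `j ≤ n` and `ρ_j = n − j` if `j > n`. -/
def rhoSp (n : ℕ) (j : Fin (2 * n)) : ℝ :=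
  if (j : ℕ) < n then (n : ℝ) - (j : ℕ) else (n : ℝ) - ((j : ℕ) + 1)

/-- The R-matrix of `Sp(2n)`:
`R = Σ_{i,j} q^{δ_{ij} − δ_{i,j'}} e_{ii} ⊗ e_{jj}
   + (q − q⁻¹) Σ_{j<i} ( e_{ij} ⊗ e_{ji} − κ_i κ_j q^{ρ_i − ρ_j} e_{ij} ⊗ e_{i',j'} )`,
where `j' = N+1-j` corresponds to `Fin.rev`. -/
def RmatSp (q : ℝ) (n : ℕ) :
    Matrix (Fin (2 * n) × Fin (2 * n)) (Fin (2 * n) × Fin (2 * n)) ℂ :=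
  (∑ i : Fin (2 * n), ∑ j : Fin (2 * n),
      ((q ^ ((if i = j then (1 : ℝ) else 0) - (if i = Fin.rev j then (1 : ℝ) else 0)) : ℝ) : ℂ)
        • kron (e i i) (e j j))
    + ((q : ℂ) - (q : ℂ)⁻¹) •
      ∑ i : Fin (2 * n), ∑ j : Fin (2 * n),
        if (j : ℕ) < (i : ℕ) then
          kron (e i j) (e j i)
            - ((kappaSp n i * kappaSp n j * q ^ (rhoSp n i - rhoSp n j) : ℝ) : ℂ)
                • kron (e i j) (e (Fin.rev i) (Fin.rev j))
        else 0

/-!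
Write `R = D + (q - q⁻¹) (T - C)` with `D` diagonal, the swap part `T = Σ_{j<i} e_{ij} ⊗ e_{ji}`
and the cross part `C = Σ_{j<i} c_{ij} e_{ij} ⊗ e_{i'j'}`, `c_{ij} = κ_i κ_j q^{ρ_i - ρ_j}`.
For diagonal `J` the defect `(X, Y) ↦ X J₁ Y^{t₁} J₂ - J₂ Y^{t₁} J₁ X` is bilinear, so it suffices
that it vanishes on the nine pairs of parts, each a short computation with matrix units of
`ℂ^N ⊗ ℂ^N`; for `(T, T)`, `(C, T)` and `(C, C)` both sides are zero. The identities behind the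
other pairs come from `ρ_{j'} = -ρ_j` and `κ_{j'} = -κ_j`: they give `J_{jj} J_{j'j'} = 1` and
the symmetry `c_{j,i'} = c_{i,j'}`.
-/

section Tensor

variable {N : ℕ}

lemma kron_e_e (a b c d : Fin N) : kron (e a b) (e c d) = single (a, c) (b, d) 1 := by
  rw [← mul_one (1 : ℂ), ← single_kronecker_single]
  rfl

lemma kron_diagonal_one (g : Fin N → ℂ) : kron (diagonal g) 1 = diagonal fun p => g p.1 := by
  rw [← diagonal_one]
  exact (diagonal_kronecker_diagonal g _).trans (by simp only [mul_one])

lemma kron_one_diagonal (g : Fin N → ℂ) : kron 1 (diagonal g) = diagonal fun p => g p.2 := by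
  rw [← diagonal_one]
  exact (diagonal_kronecker_diagonal _ g).trans (by simp only [one_mul])

lemma ptransp_add (X Y : Matrix (Fin N × Fin N) (Fin N × Fin N) ℂ) :
    ptransp (X + Y) = ptransp X + ptransp Y :=
  rfl

lemma ptransp_smul (c : ℂ) (X : Matrix (Fin N × Fin N) (Fin N × Fin N) ℂ) :
    ptransp (c • X) = c • ptransp X :=
  rfl

lemma ptransp_sum {κ : Type*} (s : Finset κ) (X : κ → Matrix (Fin N × Fin N) (Fin N × Fin N) ℂ) :
    ptransp (∑ k ∈ s, X k) = ∑ k ∈ s, ptransp (X k) := by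
  ext
  simp [ptransp, Matrix.sum_apply]

lemma ptransp_single (a c b d : Fin N) (x : ℂ) :
    ptransp (single (a, c) (b, d) x) = single (b, c) (a, d) x := by
  ext ⟨i, k⟩ ⟨j, l⟩
  simp only [ptransp, single_apply, Prod.mk.injEq]
  exact if_congr (by tauto) rfl rfl

lemma ptransp_diagonal (d : Fin N × Fin N → ℂ) : ptransp (diagonal d) = diagonal d := by
  ext ⟨i, k⟩ ⟨j, l⟩
  simp only [ptransp, diagonal_apply, Prod.mk.injEq]
  aesop

def reflectionDefect (J : Matrix (Fin N) (Fin N) ℂ) :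
    Matrix (Fin N × Fin N) (Fin N × Fin N) ℂ →ₗ[ℂ] Matrix (Fin N × Fin N) (Fin N × Fin N) ℂ →ₗ[ℂ]
      Matrix (Fin N × Fin N) (Fin N × Fin N) ℂ :=
  LinearMap.mk₂ ℂ
    (fun X Y => X * kron J 1 * ptransp Y * kron 1 J - kron 1 J * ptransp Y * kron J 1 * X)
    (fun _ _ _ => by simp only [add_mul, mul_add]; abel)
    (fun _ _ _ => by simp only [smul_mul_assoc, mul_smul_comm, smul_sub])
    (fun _ _ _ => by simp only [ptransp_add, add_mul, mul_add]; abel)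
    (fun _ _ _ => by simp only [ptransp_smul, smul_mul_assoc, mul_smul_comm, smul_sub])

lemma reflectionEq_iff_reflectionDefect (R : Matrix (Fin N × Fin N) (Fin N × Fin N) ℂ)
    (J : Matrix (Fin N) (Fin N) ℂ) : ReflectionEq R J ↔ reflectionDefect J R R = 0 :=
  sub_eq_zero.symm

lemma reflectionDefect_diagonal_apply (g : Fin N → ℂ)
    (X Y : Matrix (Fin N × Fin N) (Fin N × Fin N) ℂ) :
    reflectionDefect (diagonal g) X Y =
      X * diagonal (fun p => g p.1) * ptransp Y * diagonal (fun p => g p.2) -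
        diagonal (fun p => g p.2) * ptransp Y * diagonal (fun p => g p.1) * X := by
  rw [← kron_diagonal_one, ← kron_one_diagonal]
  rfl

end Tensor

section MatrixUnits

variable {ι α : Type*} [Fintype ι] [DecidableEq ι] [CommSemiring α]

lemma single_mul_diagonal (u v : ι) (x : α) (f : ι → α) :
    single u v x * diagonal f = single u v (x * f v) := by
  ext i j
  simp only [mul_diagonal, single_apply]
  aesop

lemma diagonal_mul_single (u v : ι) (x : α) (f : ι → α) :
    diagonal f * single u v x = single u v (f u * x) := by
  ext i j
  simp only [diagonal_mul, single_apply]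
  aesop

lemma single_mul_single (u v w z : ι) (x y : α) :
    single u v x * single w z y = if v = w then single u z (x * y) else 0 := by
  split_ifs with h
  · rw [h, single_mul_single_same]
  · exact single_mul_single_of_ne x u v w h y

lemma single_mul_diagonal_mul_single_mul_diagonal (u v w z : ι) (x y : α) (f h : ι → α) :
    single u v x * diagonal f * single w z y * diagonal h =
      if v = w then single u z (x * f v * y * h z) else 0 := by
  rw [single_mul_diagonal, single_mul_single]
  split_ifs
  · rw [single_mul_diagonal, mul_assoc x]
  · rw [zero_mul]

lemma diagonal_mul_single_mul_diagonal_mul_single (u v w z : ι) (x y : α) (f h : ι → α) :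
    diagonal h * single w z y * diagonal f * single u v x =
      if z = u then single w v (h w * y * f z * x) else 0 := by
  rw [diagonal_mul_single, single_mul_diagonal, single_mul_single]

end MatrixUnits

lemma sum_sum_single_congr {κ ι α : Type*} [Fintype κ] [DecidableEq ι] [AddCommMonoid α]
    (u v : κ → κ → ι) {x y : κ → κ → α} (h : ∀ i j, x i j = y i j) :
    ∑ i, ∑ j, single (u i j) (v i j) (x i j) = ∑ i, ∑ j, single (u i j) (v i j) (y i j) := by
  simp only [h]

lemma Fin.rev_ne_self {n : ℕ} (i : Fin (2 * n)) : i.rev ≠ i := by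
  intro h
  have := congrArg Fin.val h
  rw [Fin.val_rev] at this
  omega

section Symplectic

variable (q : ℝ) (n : ℕ)

lemma rhoSp_rev (j : Fin (2 * n)) : rhoSp n j.rev = -rhoSp n j := by
  have hj := j.isLt
  have hrev := Fin.val_rev j
  have hrev' : ((j.rev : ℕ) : ℝ) = 2 * n - ((j : ℕ) + 1) := by
    rw [hrev, Nat.cast_sub (by omega)]
    push_cast
    ring
  unfold rhoSp
  split_ifs <;> first | omega | (rw [hrev']; ring)

lemma kappaSp_rev (j : Fin (2 * n)) : kappaSp n j.rev = -kappaSp n j := by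
  have hj := j.isLt
  have hrev := Fin.val_rev j
  unfold kappaSp
  split_ifs <;> first | omega | norm_num

def spDiagCoeff (i j : Fin (2 * n)) : ℂ :=
  ((q ^ ((if i = j then (1 : ℝ) else 0) - (if i = Fin.rev j then (1 : ℝ) else 0)) : ℝ) : ℂ)

def spCrossCoeff (i j : Fin (2 * n)) : ℂ :=
  if j < i then ((kappaSp n i * kappaSp n j * q ^ (rhoSp n i - rhoSp n j) : ℝ) : ℂ) else 0

lemma spDiagCoeff_self (i : Fin (2 * n)) : spDiagCoeff q n i i = q := by
  simp [spDiagCoeff, (Fin.rev_ne_self i).symm]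

lemma spDiagCoeff_rev_self (i : Fin (2 * n)) : spDiagCoeff q n i i.rev = (q : ℂ)⁻¹ := by
  simp [spDiagCoeff, (Fin.rev_ne_self i).symm, Real.rpow_neg_one]

lemma spDiagCoeff_comm (i j : Fin (2 * n)) : spDiagCoeff q n i j = spDiagCoeff q n j i := by
  unfold spDiagCoeff
  rw [if_congr (eq_comm : i = j ↔ j = i) rfl rfl, if_congr (eq_comm.trans Fin.rev_eq_iff) rfl rfl]

lemma spDiagCoeff_rev_comm (i j : Fin (2 * n)) :
    spDiagCoeff q n i j.rev = spDiagCoeff q n j i.rev := by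
  unfold spDiagCoeff
  rw [if_congr (eq_comm.trans Fin.rev_eq_iff) rfl rfl, Fin.rev_rev, Fin.rev_rev,
    if_congr (eq_comm : i = j ↔ j = i) rfl rfl]

lemma spCrossCoeff_self (i : Fin (2 * n)) : spCrossCoeff q n i i = 0 := by
  simp [spCrossCoeff]

lemma spCrossCoeff_rev_comm (i j : Fin (2 * n)) :
    spCrossCoeff q n j i.rev = spCrossCoeff q n i j.rev := by
  unfold spCrossCoeff
  refine if_congr Fin.rev_lt_iff ?_ rfl
  rw [kappaSp_rev, kappaSp_rev, rhoSp_rev, rhoSp_rev]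
  ring_nf

def spDiagPart : Matrix (Fin (2 * n) × Fin (2 * n)) (Fin (2 * n) × Fin (2 * n)) ℂ :=
  diagonal fun p => spDiagCoeff q n p.1 p.2

def spSwapPart : Matrix (Fin (2 * n) × Fin (2 * n)) (Fin (2 * n) × Fin (2 * n)) ℂ :=
  ∑ i, ∑ j, single (i, j) (j, i) (if j < i then 1 else 0)

def spCrossPart : Matrix (Fin (2 * n) × Fin (2 * n)) (Fin (2 * n) × Fin (2 * n)) ℂ :=
  ∑ i, ∑ j, single (i, i.rev) (j, j.rev) (spCrossCoeff q n i j)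

lemma RmatSp_eq_parts :
    RmatSp q n = spDiagPart q n + ((q : ℂ) - (q : ℂ)⁻¹) • (spSwapPart n - spCrossPart q n) := by
  unfold RmatSp
  congr 1
  · simp only [kron_e_e, smul_single, smul_eq_mul, mul_one, spDiagPart, spDiagCoeff]
    rw [← sum_single_eq_diagonal, Fintype.sum_prod_type]
  · congr 1
    simp only [spSwapPart, spCrossPart, ← Finset.sum_sub_distrib]
    refine Finset.sum_congr rfl fun i _ => Finset.sum_congr rfl fun j _ => ?_
    simp only [kron_e_e, smul_single, smul_eq_mul, mul_one, Fin.val_fin_lt, spCrossCoeff]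
    split_ifs <;> simp

variable {q n} {g : Fin (2 * n) → ℂ}

lemma reflectionDefect_spDiagPart_spDiagPart :
    reflectionDefect (diagonal g) (spDiagPart q n) (spDiagPart q n) = 0 := by
  rw [reflectionDefect_diagonal_apply, sub_eq_zero, spDiagPart]
  simp only [ptransp_diagonal, diagonal_mul_diagonal]
  exact congrArg diagonal (funext fun p => by ring)

lemma reflectionDefect_spDiagPart_spSwapPart :
    reflectionDefect (diagonal g) (spDiagPart q n) (spSwapPart n) = 0 := by
  rw [reflectionDefect_diagonal_apply, sub_eq_zero, spDiagPart, spSwapPart]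
  simp only [ptransp_sum, ptransp_single, Finset.sum_mul, Finset.mul_sum, diagonal_mul_diagonal,
    diagonal_mul_single, single_mul_diagonal, spDiagCoeff_self]
  exact sum_sum_single_congr _ _ fun i j => by ring

lemma reflectionDefect_spSwapPart_spDiagPart :
    reflectionDefect (diagonal g) (spSwapPart n) (spDiagPart q n) = 0 := by
  rw [reflectionDefect_diagonal_apply, sub_eq_zero, spDiagPart, spSwapPart]
  simp only [ptransp_diagonal, Finset.sum_mul, Finset.mul_sum, diagonal_mul_diagonal,
    diagonal_mul_single, single_mul_diagonal]
  exact sum_sum_single_congr _ _ fun i j => by rw [spDiagCoeff_comm]; ring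

lemma reflectionDefect_spDiagPart_spCrossPart (hg : ∀ j, g j * g j.rev = 1) :
    reflectionDefect (diagonal g) (spDiagPart q n) (spCrossPart q n) = 0 := by
  rw [reflectionDefect_diagonal_apply, sub_eq_zero, spDiagPart, spCrossPart]
  simp only [ptransp_sum, ptransp_single, Finset.sum_mul, Finset.mul_sum, diagonal_mul_diagonal,
    diagonal_mul_single, single_mul_diagonal]
  refine sum_sum_single_congr _ _ fun i j => ?_
  rw [spDiagCoeff_rev_comm]
  linear_combination (spDiagCoeff q n i j.rev * spCrossCoeff q n i j) * (hg j - hg i)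

lemma reflectionDefect_spCrossPart_spDiagPart (hg : ∀ j, g j * g j.rev = 1) :
    reflectionDefect (diagonal g) (spCrossPart q n) (spDiagPart q n) = 0 := by
  rw [reflectionDefect_diagonal_apply, sub_eq_zero, spDiagPart, spCrossPart]
  simp only [ptransp_diagonal, Finset.sum_mul, Finset.mul_sum, diagonal_mul_diagonal,
    diagonal_mul_single, single_mul_diagonal, spDiagCoeff_rev_self]
  refine sum_sum_single_congr _ _ fun i j => ?_
  linear_combination ((q : ℂ)⁻¹ * spCrossCoeff q n i j) * (hg j - hg i)

lemma reflectionDefect_spSwapPart_spSwapPart :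
    reflectionDefect (diagonal g) (spSwapPart n) (spSwapPart n) = 0 := by
  rw [reflectionDefect_diagonal_apply, sub_eq_zero, spSwapPart]
  simp only [ptransp_sum, ptransp_single, Finset.sum_mul, Finset.mul_sum,
    single_mul_diagonal_mul_single_mul_diagonal, diagonal_mul_single_mul_diagonal_mul_single]
  simp [ite_and, Finset.sum_ite_eq']

lemma reflectionDefect_spCrossPart_spSwapPart :
    reflectionDefect (diagonal g) (spCrossPart q n) (spSwapPart n) = 0 := by
  rw [reflectionDefect_diagonal_apply, sub_eq_zero, spSwapPart, spCrossPart]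
  simp only [ptransp_sum, ptransp_single, Finset.sum_mul, Finset.mul_sum,
    single_mul_diagonal_mul_single_mul_diagonal, diagonal_mul_single_mul_diagonal_mul_single]
  simp [ite_and, Finset.sum_ite_eq', Fin.rev_ne_self, (Fin.rev_ne_self _).symm]

lemma reflectionDefect_spCrossPart_spCrossPart :
    reflectionDefect (diagonal g) (spCrossPart q n) (spCrossPart q n) = 0 := by
  rw [reflectionDefect_diagonal_apply, sub_eq_zero, spCrossPart]
  simp only [ptransp_sum, ptransp_single, Finset.sum_mul, Finset.mul_sum,
    single_mul_diagonal_mul_single_mul_diagonal, diagonal_mul_single_mul_diagonal_mul_single]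
  simp [ite_and, Finset.sum_ite_eq', spCrossCoeff_self]

lemma reflectionDefect_spSwapPart_spCrossPart :
    reflectionDefect (diagonal g) (spSwapPart n) (spCrossPart q n) = 0 := by
  rw [reflectionDefect_diagonal_apply, sub_eq_zero, spSwapPart, spCrossPart]
  simp only [ptransp_sum, ptransp_single, Finset.sum_mul, Finset.mul_sum,
    single_mul_diagonal_mul_single_mul_diagonal, diagonal_mul_single_mul_diagonal_mul_single]
  simp only [Prod.mk.injEq, ite_and, Fin.rev_eq_iff, mul_ite, ite_mul, mul_one, one_mul, mul_zero,
    zero_mul, Finset.sum_ite_eq', Finset.sum_ite_irrel, Finset.sum_const_zero, Finset.mem_univ,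
    if_true]
  rw [Finset.sum_comm, ← Equiv.sum_comp Fin.revPerm]
  simp only [Fin.revPerm_apply, Fin.rev_rev, Fin.rev_lt_rev]
  exact sum_sum_single_congr _ _ fun i j => by rw [spCrossCoeff_rev_comm]

end Symplectic

theorem reflection_equation_diag_Sp_general (q : ℝ) (hq0 : 0 < q)
    (n : ℕ) :
    ReflectionEq (RmatSp q n)
      (Matrix.diagonal fun j : Fin (2 * n) => ((q ^ (rhoSp n j) : ℝ) : ℂ)) := by
  have hJ (j : Fin (2 * n)) : ((q ^ rhoSp n j : ℝ) : ℂ) * ((q ^ rhoSp n j.rev : ℝ) : ℂ) = 1 := by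
    rw [← Complex.ofReal_mul, ← Real.rpow_add hq0, rhoSp_rev, add_neg_cancel, Real.rpow_zero,
      Complex.ofReal_one]
  rw [reflectionEq_iff_reflectionDefect, RmatSp_eq_parts]
  simp only [map_add, map_smul, map_sub, LinearMap.add_apply, LinearMap.smul_apply,
    LinearMap.sub_apply, reflectionDefect_spDiagPart_spDiagPart,
    reflectionDefect_spDiagPart_spSwapPart, reflectionDefect_spSwapPart_spDiagPart,
    reflectionDefect_spDiagPart_spCrossPart hJ, reflectionDefect_spCrossPart_spDiagPart hJ,
    reflectionDefect_spSwapPart_spSwapPart, reflectionDefect_spCrossPart_spSwapPart,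
    reflectionDefect_spCrossPart_spCrossPart, reflectionDefect_spSwapPart_spCrossPart,
    smul_zero, sub_self, add_zero]

/-- the diagonal matrix `J = diag(q^{ρ_1}, …, q^{ρ_N})` satisfies the reflection
equation for the R-matrix of `Sp(2n)`. -/
theorem reflection_equation_diag_Sp (q : ℝ) (hq0 : 0 < q) (hq1 : q < 1)
    (n : ℕ) (hn : 1 ≤ n) :
    ReflectionEq (RmatSp q n)
      (Matrix.diagonal fun j : Fin (2 * n) => ((q ^ (rhoSp n j) : ℝ) : ℂ)) :=
  reflection_equation_diag_Sp_general q hq0 n
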